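/- Let f : ℝ^n → ℝ be bounded below and Lipschitz continuous, let γ ∈ (0,1) and M ∈ ℕ. Let {w^k} ⊂ ℝ^n be a sequence and for each k set R^k = max_{0 ≤ j ≤ min(k,M)} f(w^{k−j}). Suppose that for every k, f(w^{k+1}) ≤ R^k − γ min{ ‖w^{k+1} − w^k‖, ‖w^{k+1} − w^k‖² }. Then: (i) f(w^k) ≤ f(w^0) for all k, i.e. w^k ∈ L(w^0) for all k; (ii) the sequences {R^k} and {f(w^k)} are both convergent and have the same limit; (iii) lim_{k→∞} ‖w^{k+1} − w^k‖ = 0. -/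

import Mathlib

/-!
The reference values `R k` are nonincreasing, since the new value `f (w (k+1))` lies below `R k`,
and bounded below, so they converge to some `l`. Let `ℓ k ∈ [k - M, k]` be an index attaining `R k`.
Along `ℓ k` the objective tends to `l`; the sufficient decrease at step `ℓ k - 1` bounds
`γ min{s, s²}` for `s = ‖w (ℓ k) - w (ℓ k - 1)‖` by `R (ℓ k - 1) - R k → 0`, so that step tends to
`0`, and by the Lipschitz bound the objective also tends to `l` along `ℓ k - 1`. Iterating, this holds
along `ℓ k - j` for every `j`, and since every index `k` is of the form `ℓ (k + M) - j` with `j ≤ M`,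
it holds along the whole sequence.
-/

open Filter Finset

/-- `refMax g M k = max_{0 ≤ j ≤ min(k,M)} g (k - j)`, the nonmonotone reference
maximum over the last `min(k,M)+1` values. -/
noncomputable def refMax (g : ℕ → ℝ) (M k : ℕ) : ℝ :=
  (Finset.range (min k M + 1)).sup' Finset.nonempty_range_add_one fun j => g (k - j)

open Topology

section refMax

variable {g : ℕ → ℝ} {M : ℕ}

theorem le_refMax {k j : ℕ} (hj : j ≤ min k M) : g (k - j) ≤ refMax g M k :=
  Finset.le_sup' (fun j => g (k - j)) (Finset.mem_range_succ_iff.mpr hj)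

theorem apply_le_refMax (k : ℕ) : g k ≤ refMax g M k := by
  simpa using le_refMax (g := g) (M := M) (k := k) (Nat.zero_le _)

theorem refMax_zero : refMax g M 0 = g 0 := by
  simp [refMax]

theorem exists_apply_eq_refMax (g : ℕ → ℝ) (M k : ℕ) :
    ∃ i, i ≤ k ∧ k ≤ i + M ∧ g i = refMax g M k := by
  obtain ⟨j, hj, hmax⟩ := Finset.exists_mem_eq_sup' nonempty_range_add_one fun j => g (k - j)
  rw [Finset.mem_range_succ_iff] at hj
  exact ⟨k - j, Nat.sub_le k j, by omega, hmax.symm⟩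

theorem refMax_succ_le {k : ℕ} (h : g (k + 1) ≤ refMax g M k) :
    refMax g M (k + 1) ≤ refMax g M k := by
  refine Finset.sup'_le _ _ fun j hj => ?_
  rcases j with _ | j
  · exact h
  · rw [Nat.add_sub_add_right]
    exact le_refMax (by rw [Finset.mem_range] at hj; omega)

variable (h : ∀ k, g (k + 1) ≤ refMax g M k)
include h

theorem antitone_refMax : Antitone (refMax g M) :=
  antitone_nat_of_succ_le fun _ => refMax_succ_le (h _)

theorem apply_le_apply_zero (k : ℕ) : g k ≤ g 0 :=
  (apply_le_refMax k).trans <| refMax_zero (M := M) ▸ antitone_refMax h (Nat.zero_le k)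

theorem tendsto_refMax (hg : BddBelow (Set.range g)) :
    Tendsto (refMax g M) atTop (𝓝 (⨅ k, refMax g M k)) := by
  obtain ⟨c, hc⟩ := hg
  refine tendsto_atTop_ciInf (antitone_refMax h) ⟨c, ?_⟩
  rintro _ ⟨k, rfl⟩
  exact (hc ⟨k, rfl⟩).trans (apply_le_refMax k)

end refMax

theorem le_max_min_sq_sqrt {t : ℝ} (ht : 0 ≤ t) :
    t ≤ max (min t (t ^ 2)) √(min t (t ^ 2)) := by
  rcases le_total t 1 with h | h
  · rw [min_eq_right (by nlinarith), Real.sqrt_sq ht]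
    exact le_max_right _ _
  · rw [min_eq_left (by nlinarith)]
    exact le_max_left _ _

theorem tendsto_zero_of_tendsto_min_sq {ι : Type*} {F : Filter ι} {u : ι → ℝ}
    (hu : ∀ i, 0 ≤ u i) (h : Tendsto (fun i => min (u i) (u i ^ 2)) F (𝓝 0)) :
    Tendsto u F (𝓝 0) := by
  have hmax : Tendsto (fun i => max (min (u i) (u i ^ 2)) √(min (u i) (u i ^ 2))) F (𝓝 0) := by
    simpa using h.max h.sqrt
  exact squeeze_zero hu (fun i => le_max_min_sq_sqrt (hu i)) hmax

/-- Every index `k` is `ℓ (k + M) - j` for some `j ≤ M`. -/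
theorem tendsto_of_forall_tendsto_comp_sub {X : Type*} [TopologicalSpace X] {u : ℕ → X} {a : X}
    {ℓ : ℕ → ℕ} {M : ℕ} (hℓ_le : ∀ k, ℓ k ≤ k) (hle_ℓ : ∀ k, k ≤ ℓ k + M)
    (h : ∀ j ≤ M, Tendsto (fun k => u (ℓ k - j)) atTop (𝓝 a)) : Tendsto u atTop (𝓝 a) := by
  intro U hU
  have hall : ∀ᶠ k in atTop, ∀ j ∈ Finset.range (M + 1), u (ℓ k - j) ∈ U :=
    (Finset.eventually_all _).2 fun j hj => h j (Finset.mem_range_succ_iff.1 hj) hU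
  obtain ⟨N, hN⟩ := eventually_atTop.1 hall
  refine eventually_atTop.2 ⟨N, fun k hk => ?_⟩
  have hk' := hN (k + M) (by omega) (ℓ (k + M) - k)
    (Finset.mem_range_succ_iff.2 (by have := hℓ_le (k + M); omega))
  rwa [Nat.sub_sub_self (by have := hle_ℓ (k + M); omega)] at hk'

theorem tendsto_comp_pred_of_descent {ι : Type*} {F : Filter ι} {R g s : ℕ → ℝ} {γ L l : ℝ}
    (hγ : 0 < γ)
    (hs : ∀ k, 0 ≤ s k) (hdecr : ∀ k, g (k + 1) ≤ R k - γ * min (s k) (s k ^ 2))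
    (hlip : ∀ k, |g (k + 1) - g k| ≤ L * s k) (hR : Tendsto R atTop (𝓝 l))
    {m : ι → ℕ} (hm : Tendsto m F atTop) (hg : Tendsto (fun i => g (m i)) F (𝓝 l)) :
    Tendsto (fun i => s (m i - 1)) F (𝓝 0) ∧ Tendsto (fun i => g (m i - 1)) F (𝓝 l) := by
  have hm_pred : Tendsto (fun i => m i - 1) F atTop := (tendsto_sub_atTop_nat 1).comp hm
  have hsucc : ∀ᶠ i in F, m i - 1 + 1 = m i :=
    (hm.eventually_ge_atTop 1).mono fun i hi => Nat.sub_add_cancel hi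
  have hgap : Tendsto (fun i => (R (m i - 1) - g (m i)) / γ) F (𝓝 0) := by
    simpa using ((hR.comp hm_pred).sub hg).div_const γ
  have hs_lim : Tendsto (fun i => s (m i - 1)) F (𝓝 0) := by
    refine tendsto_zero_of_tendsto_min_sq (fun _ => hs _) (squeeze_zero'
      (Eventually.of_forall fun i => le_min (hs _) (sq_nonneg _)) ?_ hgap)
    filter_upwards [hsucc] with i hi
    have := hdecr (m i - 1)
    rw [hi] at this
    rw [le_div_iff₀ hγ]
    linarith
  have hdiff : Tendsto (fun i => g (m i - 1) - g (m i)) F (𝓝 0) := by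
    refine squeeze_zero_norm' ?_ (by simpa using hs_lim.const_mul L)
    filter_upwards [hsucc] with i hi
    have := hlip (m i - 1)
    rwa [hi, abs_sub_comm] at this
  exact ⟨hs_lim, by simpa using hdiff.add hg⟩

theorem stmt_15_general {n : ℕ}
    (f : EuclideanSpace ℝ (Fin n) → ℝ)
    (hbdd : BddBelow (Set.range f))
    (L' : ℝ)
    (hlip : ∀ u v : EuclideanSpace ℝ (Fin n), |f u - f v| ≤ L' * ‖u - v‖)
    (γ : ℝ) (hγ : γ ∈ Set.Ioo (0 : ℝ) 1)
    (M : ℕ)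
    (w : ℕ → EuclideanSpace ℝ (Fin n)) (R : ℕ → ℝ)
    (hR : ∀ k, R k = refMax (fun k => f (w k)) M k)
    (hdecr : ∀ k, f (w (k + 1)) ≤
      R k - γ * min ‖w (k + 1) - w k‖ (‖w (k + 1) - w k‖ ^ 2)) :
    (∀ k, f (w k) ≤ f (w 0)) ∧
    (∃ l : ℝ, Tendsto R atTop (nhds l) ∧
      Tendsto (fun k => f (w k)) atTop (nhds l)) ∧
    Tendsto (fun k => ‖w (k + 1) - w k‖) atTop (nhds 0) := by
  obtain rfl : R = refMax (fun k => f (w k)) M := funext hR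
  set g : ℕ → ℝ := fun k => f (w k)
  set s : ℕ → ℝ := fun k => ‖w (k + 1) - w k‖
  have hs : ∀ k, 0 ≤ s k := fun k => norm_nonneg _
  have hstep : ∀ k, g (k + 1) ≤ refMax g M k := fun k =>
    (hdecr k).trans (sub_le_self _ (mul_nonneg hγ.1.le (le_min (hs k) (sq_nonneg _))))
  set l := ⨅ k, refMax g M k
  have hR_lim : Tendsto (refMax g M) atTop (𝓝 l) :=
    tendsto_refMax hstep (hbdd.mono (Set.range_comp_subset_range w f))
  choose ℓ hℓ_le hle_ℓ hgℓ using exists_apply_eq_refMax g M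
  have hℓ_sub (j : ℕ) : Tendsto (fun k => ℓ k - j) atTop atTop :=
    (tendsto_sub_atTop_nat j).comp <| tendsto_atTop_mono
      (fun k => Nat.sub_le_iff_le_add.2 (hle_ℓ k)) (tendsto_sub_atTop_nat M)
  have descent {j : ℕ} (hj : Tendsto (fun k => g (ℓ k - j)) atTop (𝓝 l)) :=
    tendsto_comp_pred_of_descent (g := g) hγ.1 hs hdecr (fun k => hlip _ _) hR_lim (hℓ_sub j) hj
  have hg (j : ℕ) : Tendsto (fun k => g (ℓ k - j)) atTop (𝓝 l) := by
    induction j with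
    | zero => simpa [hgℓ] using hR_lim
    | succ j ih => simpa only [Nat.sub_add_eq] using (descent ih).2
  have hs_pred : Tendsto (fun k => s (k - 1)) atTop (𝓝 0) :=
    tendsto_of_forall_tendsto_comp_sub hℓ_le hle_ℓ fun j _ => (descent (hg j)).1
  refine ⟨apply_le_apply_zero hstep, ⟨_, hR_lim,
    tendsto_of_forall_tendsto_comp_sub hℓ_le hle_ℓ fun j _ => hg j⟩, ?_⟩
  simpa using (tendsto_add_atTop_iff_nat 1).2 hs_pred

/-- Proposition `propgrippo2007_1` on the NMCMA iterates.
If `f` is bounded below and Lipschitz, `R^k = max_{0≤j≤min(k,M)} f(w^{k-j})`,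
and `f(w^{k+1}) ≤ R^k - γ min{‖w^{k+1}-w^k‖, ‖w^{k+1}-w^k‖²}` for all `k`, then
(i) `f(w^k) ≤ f(w^0)` for all `k`; (ii) `{R^k}` and `{f(w^k)}` converge to a
common limit; (iii) `‖w^{k+1} - w^k‖ → 0`. -/
theorem stmt_15 {n : ℕ}
    (f : EuclideanSpace ℝ (Fin n) → ℝ)
    (hbdd : BddBelow (Set.range f))
    (L' : ℝ) (hL' : 0 < L')
    (hlip : ∀ u v : EuclideanSpace ℝ (Fin n), |f u - f v| ≤ L' * ‖u - v‖)
    (γ : ℝ) (hγ : γ ∈ Set.Ioo (0 : ℝ) 1)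
    (M : ℕ)
    (w : ℕ → EuclideanSpace ℝ (Fin n)) (R : ℕ → ℝ)
    (hR : ∀ k, R k = refMax (fun k => f (w k)) M k)
    (hdecr : ∀ k, f (w (k + 1)) ≤
      R k - γ * min ‖w (k + 1) - w k‖ (‖w (k + 1) - w k‖ ^ 2)) :
    (∀ k, f (w k) ≤ f (w 0)) ∧
    (∃ l : ℝ, Tendsto R atTop (nhds l) ∧
      Tendsto (fun k => f (w k)) atTop (nhds l)) ∧
    Tendsto (fun k => ‖w (k + 1) - w k‖) atTop (nhds 0) :=
  stmt_15_general f hbdd L' hlip γ hγ M w R hR hdecr
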